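/- For any subfamily 𝔠′ of the circuits of a matroid M, the ideal generated by the differentials of 𝔠′ equals the ideal generated by the differentials of its Δ-closure: ℑ(𝔠′) = ℑ(cl_Δ(𝔠′)). -/

import Mathlib

/-!
`∂` is an antiderivation of degree `-1` with `∂ e_i = 1`. If `A ∩ B = {i}`, put `a = A \ B` and
`b = B \ A`; then `e_A = ± e_a e_i`, `e_B = ± e_i e_b`, `e_{A Δ B} = ± e_a e_b`, and the Leibniz
rule gives `∂(e_a e_b) = ∂e_a · ∂(e_i e_b) + ∂(e_a e_i) · ∂e_b`, so `∂e_{A Δ B}` lies in every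
two-sided ideal containing `∂e_A` and `∂e_B`. For `i ∈ A` we have `e_i e_A = 0`, hence
`e_A = e_i ∂e_A`, and then `∂e_B = ± ∂(e_A e_{B \ A})` lies in any such ideal for `A ⊆ B`. So the
nonempty `Y` with `∂e_Y ∈ ℑ(𝔠')` form a `Δ`-closed family containing the (nonempty) circuits
of `𝔠'`.
-/

open ExteriorAlgebra

/-- The Grassmann algebra over `K` on generators `e 0, ..., e (n-1)`. -/
abbrev Grass (K : Type) [Field K] (n : ℕ) := ExteriorAlgebra K (Fin n → K)

/-- The generator `e i`. -/
noncomputable def gen (K : Type) [Field K] (n : ℕ) (i : Fin n) : Grass K n :=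
  ExteriorAlgebra.ι K (Pi.single i 1)

/-- The monomial associated to a list of indices. -/
noncomputable def monList (K : Type) [Field K] (n : ℕ) (l : List (Fin n)) : Grass K n :=
  (l.map (gen K n)).prod

/-- The monomial `e_X` of a subset `X ⊆ [n]`, factors in increasing order. -/
noncomputable def mon (K : Type) [Field K] (n : ℕ) (X : Finset (Fin n)) : Grass K n :=
  monList K n (X.sort (· ≤ ·))

/-- The degree `-1` antiderivation `∂` on the Grassmann algebra with `∂ (e i) = 1`
(left contraction with the covector sending each generator to `1`). -/
noncomputable def bd (K : Type) [Field K] (n : ℕ) : Grass K n →ₗ[K] Grass K n :=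
  CliffordAlgebra.contractLeft (∑ i : Fin n, LinearMap.proj i)

/-- The two-sided ideal `ℑ(𝔛)` generated by the differentials `∂ e_Y`, `Y ∈ 𝔛`. -/
noncomputable def OSIdeal (K : Type) [Field K] (n : ℕ) (X : Set (Finset (Fin n))) :
    TwoSidedIdeal (Grass K n) :=
  TwoSidedIdeal.span ((fun Y => bd K n (mon K n Y)) '' X)

/-- A circuit of a matroid: a minimal dependent (finite) set. -/
def IsCircuit {α : Type} [DecidableEq α] (M : Matroid α) (C : Finset α) : Prop :=
  M.Dep (C : Set α) ∧ ∀ D : Finset α, D ⊂ C → ¬ M.Dep (D : Set α)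

/-- `i` is a chord of the circuit `C`, witnessed by circuits `C₁, C₂` with
`C₁ ∩ C₂ = {i}` and `C = C₁ Δ C₂`. -/
def IsChord {α : Type} [DecidableEq α] (M : Matroid α) (C : Finset α) (i : α) : Prop :=
  ∃ C₁ C₂ : Finset α, IsCircuit M C₁ ∧ IsCircuit M C₂ ∧ C₁ ∩ C₂ = {i} ∧ C = symmDiff C₁ C₂

def HasChord {α : Type} [DecidableEq α] (M : Matroid α) (C : Finset α) : Prop :=
  ∃ i, IsChord M C i

/-- `M` is `ℓ`-chordal: every circuit with at least `ℓ` elements has a chord. -/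
def Chordal {α : Type} [DecidableEq α] (M : Matroid α) (l : ℕ) : Prop :=
  ∀ C : Finset α, IsCircuit M C → l ≤ C.card → HasChord M C

/-- `M` is simple: every circuit has at least 3 elements. -/
def SimpleM {α : Type} [DecidableEq α] (M : Matroid α) : Prop :=
  ∀ C : Finset α, IsCircuit M C → 3 ≤ C.card

/-- `M` is binary: the symmetric difference of two distinct circuits contains a circuit. -/
def BinaryM {α : Type} [DecidableEq α] (M : Matroid α) : Prop :=
  ∀ C D : Finset α, IsCircuit M C → IsCircuit M D → C ≠ D →
    ∃ C', IsCircuit M C' ∧ C' ⊆ symmDiff C D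

/-- The set `𝔠` of circuits of `M`. -/
def Circuits {α : Type} [DecidableEq α] (M : Matroid α) : Set (Finset α) :=
  {C | IsCircuit M C}

/-- The set `𝔠_k` of circuits of `M` with at most `k` elements. -/
def CircuitsLe {α : Type} [DecidableEq α] (M : Matroid α) (k : ℕ) : Set (Finset α) :=
  {C | IsCircuit M C ∧ C.card ≤ k}

/-- A family of subsets is `Δ`-closed: upward closed, and closed under symmetric
differences of two members of size `≥ 2` meeting in exactly one element. -/
def DeltaClosed {α : Type} [DecidableEq α] (X : Set (Finset α)) : Prop :=
  (∀ A B : Finset α, A ⊆ B → A ∈ X → B ∈ X) ∧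
  (∀ A B : Finset α, ∀ i : α, A ∈ X → B ∈ X → 2 ≤ A.card → 2 ≤ B.card →
      A ∩ B = {i} → symmDiff A B ∈ X)

/-- The smallest `Δ`-closed family containing `Z`. -/
def clDelta {α : Type} [DecidableEq α] (Z : Set (Finset α)) : Set (Finset α) :=
  ⋂₀ {X | DeltaClosed X ∧ Z ⊆ X}

variable {K : Type} [Field K] {n : ℕ}

lemma bd_one : bd K n 1 = 0 := CliffordAlgebra.contractLeft_one _ _

lemma bd_gen_mul (i : Fin n) (x : Grass K n) :
    bd K n (gen K n i * x) = x - gen K n i * bd K n x := by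
  have h : (∑ j : Fin n, (LinearMap.proj j : (Fin n → K) →ₗ[K] K)) (Pi.single i 1) = 1 := by
    simp [Finset.sum_pi_single']
  have := CliffordAlgebra.contractLeft_ι_mul (∑ j : Fin n, LinearMap.proj j) (Pi.single i (1 : K)) x
  rwa [h, one_smul] at this

lemma bd_gen (i : Fin n) : bd K n (gen K n i) = 1 := by
  simpa [bd_one] using bd_gen_mul (K := K) i 1

lemma gen_mul_self (i : Fin n) : gen K n i * gen K n i = 0 :=
  ExteriorAlgebra.ι_sq_zero _

lemma gen_mul_comm (i j : Fin n) : gen K n i * gen K n j = -(gen K n j * gen K n i) :=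
  eq_neg_of_add_eq_zero_left (ExteriorAlgebra.ι_add_mul_swap _ _)

@[simp] lemma monList_nil : monList K n [] = 1 := rfl

@[simp] lemma monList_cons (i : Fin n) (l : List (Fin n)) :
    monList K n (i :: l) = gen K n i * monList K n l := by
  simp [monList]

lemma monList_append (l m : List (Fin n)) :
    monList K n (l ++ m) = monList K n l * monList K n m := by
  simp [monList]

lemma bd_monList_mul (l : List (Fin n)) (y : Grass K n) :
    bd K n (monList K n l * y)
      = bd K n (monList K n l) * y + ((-1 : ℤ) ^ l.length) • (monList K n l * bd K n y) := by
  induction l with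
  | nil => simp [bd_one]
  | cons i l ih =>
    simp only [monList_cons, mul_assoc, bd_gen_mul, ih, mul_add, sub_mul, List.length_cons,
      pow_succ, mul_neg_one, neg_smul, mul_smul_comm]
    abel

lemma monList_eq_or_eq_neg_of_perm {l l' : List (Fin n)} (h : l.Perm l') :
    monList K n l = monList K n l' ∨ monList K n l = -monList K n l' := by
  induction h with
  | nil => exact .inl rfl
  | cons i _ ih => rcases ih with ih | ih <;> simp [ih]
  | swap i j l =>
    right
    simp only [monList_cons, ← mul_assoc, gen_mul_comm j i, neg_mul]
  | trans _ _ ih₁ ih₂ => rcases ih₁ with ih₁ | ih₁ <;> rcases ih₂ with ih₂ | ih₂ <;> simp [ih₁, ih₂]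

lemma mon_singleton (i : Fin n) : mon K n {i} = gen K n i := by
  simp [mon, Finset.sort_singleton]

lemma mon_union_eq_or_eq_neg {s t : Finset (Fin n)} (h : Disjoint s t) :
    mon K n (s ∪ t) = mon K n s * mon K n t ∨ mon K n (s ∪ t) = -(mon K n s * mon K n t) := by
  rw [mon, mon, mon, ← monList_append]
  refine monList_eq_or_eq_neg_of_perm (Multiset.coe_eq_coe.mp ?_)
  rw [← Multiset.coe_add, Finset.sort_eq, Finset.sort_eq, Finset.sort_eq,
    ← Finset.disjUnion_eq_union _ _ h]
  rfl

lemma bd_mon_mul (X : Finset (Fin n)) (y : Grass K n) :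
    bd K n (mon K n X * y)
      = bd K n (mon K n X) * y + ((-1 : ℤ) ^ X.card) • (mon K n X * bd K n y) := by
  rw [mon, bd_monList_mul, Finset.length_sort]

lemma bd_mon_mul_mon (a b : Finset (Fin n)) (i : Fin n) :
    bd K n (mon K n a * mon K n b)
      = bd K n (mon K n a) * bd K n (gen K n i * mon K n b)
        + bd K n (mon K n a * gen K n i) * bd K n (mon K n b) := by
  simp only [bd_mon_mul, bd_gen_mul, bd_gen, mul_one, mul_sub, add_mul, smul_mul_assoc, mul_assoc]
  abel

section Ideal

variable {I : TwoSidedIdeal (Grass K n)}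

lemma bd_mem_iff_of_eq_or_eq_neg {x y : Grass K n} (h : x = y ∨ x = -y) :
    bd K n x ∈ I ↔ bd K n y ∈ I := by
  rcases h with rfl | rfl
  · rfl
  · rw [map_neg, neg_mem_iff]

lemma gen_mul_mon_of_mem {A : Finset (Fin n)} {i : Fin n} (hi : i ∈ A) :
    gen K n i * mon K n A = 0 := by
  have hA : A = {i} ∪ A.erase i := by simp [Finset.insert_erase hi]
  rcases mon_union_eq_or_eq_neg (K := K) (Finset.disjoint_singleton_left.mpr (A.notMem_erase i))
    with h | h <;> rw [hA, h, mon_singleton] <;> simp [← mul_assoc, gen_mul_self]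

lemma mon_mem_of_bd_mon_mem {A : Finset (Fin n)} (hA : A.Nonempty) (h : bd K n (mon K n A) ∈ I) :
    mon K n A ∈ I := by
  obtain ⟨i, hi⟩ := hA
  have := bd_gen_mul i (mon K n A)
  rw [gen_mul_mon_of_mem hi, map_zero, eq_comm, sub_eq_zero] at this
  exact this ▸ I.mul_mem_left _ _ h

lemma bd_mon_mem_of_subset {A B : Finset (Fin n)} (hA : A.Nonempty) (hAB : A ⊆ B)
    (h : bd K n (mon K n A) ∈ I) : bd K n (mon K n B) ∈ I := by
  rw [← Finset.union_sdiff_of_subset hAB,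
    bd_mem_iff_of_eq_or_eq_neg (mon_union_eq_or_eq_neg Finset.disjoint_sdiff), bd_mon_mul]
  exact I.add_mem (I.mul_mem_right _ _ h)
    (I.zsmul_mem _ (I.mul_mem_right _ _ (mon_mem_of_bd_mon_mem hA h)))

lemma bd_mon_symmDiff_mem {A B : Finset (Fin n)} {i : Fin n} (hAB : A ∩ B = {i})
    (hA : bd K n (mon K n A) ∈ I) (hB : bd K n (mon K n B) ∈ I) :
    bd K n (mon K n (symmDiff A B)) ∈ I := by
  have hA' : A = (A \ B) ∪ {i} := by
    rw [← hAB, Finset.sdiff_union_inter]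
  have hB' : B = {i} ∪ (B \ A) := by
    rw [← hAB, Finset.inter_comm, Finset.union_comm, Finset.sdiff_union_inter]
  have hdA : Disjoint (A \ B) {i} := by
    rw [← hAB]; exact Finset.disjoint_sdiff_inter A B
  have hdB : Disjoint {i} (B \ A) := by
    rw [← hAB, Finset.inter_comm]; exact (Finset.disjoint_sdiff_inter B A).symm
  rw [hA', bd_mem_iff_of_eq_or_eq_neg (mon_union_eq_or_eq_neg hdA), mon_singleton] at hA
  rw [hB', bd_mem_iff_of_eq_or_eq_neg (mon_union_eq_or_eq_neg hdB), mon_singleton] at hB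
  rw [symmDiff_def, Finset.sup_eq_union,
    bd_mem_iff_of_eq_or_eq_neg (mon_union_eq_or_eq_neg disjoint_sdiff_sdiff), bd_mon_mul_mon _ _ i]
  exact I.add_mem (I.mul_mem_left _ _ hB) (I.mul_mem_right _ _ hA)

end Ideal

section DeltaClosure

variable {α : Type} [DecidableEq α]

lemma subset_clDelta (Z : Set (Finset α)) : Z ⊆ clDelta Z := fun _ hY _ hX => hX.2 hY

lemma clDelta_subset {Z X : Set (Finset α)} (hX : DeltaClosed X) (hZX : Z ⊆ X) :
    clDelta Z ⊆ X :=
  Set.sInter_subset_of_mem ⟨hX, hZX⟩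

lemma symmDiff_nonempty_of_inter_eq_singleton {A B : Finset α} {i : α} (hAB : A ∩ B = {i})
    (hA : 2 ≤ A.card) : (symmDiff A B).Nonempty := by
  have : 1 ≤ (A \ B).card := by
    rw [Finset.card_sdiff, Finset.inter_comm, hAB, Finset.card_singleton]
    omega
  exact (Finset.card_pos.mp this).mono (by rw [symmDiff_def]; exact le_sup_left)

end DeltaClosure

/-- `∅` must be excluded: `∂ e_∅ = 0` lies in every ideal, but `∂ e_{i} = 1`. -/
def bdMemFamily (I : TwoSidedIdeal (Grass K n)) : Set (Finset (Fin n)) :=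
  {Y | Y.Nonempty ∧ bd K n (mon K n Y) ∈ I}

lemma deltaClosed_bdMemFamily (I : TwoSidedIdeal (Grass K n)) : DeltaClosed (bdMemFamily I) :=
  ⟨fun _ _ hAB hA => ⟨hA.1.mono hAB, bd_mon_mem_of_subset hA.1 hAB hA.2⟩,
    fun _ _ _ hA hB h2A _ hAB =>
      ⟨symmDiff_nonempty_of_inter_eq_singleton hAB h2A, bd_mon_symmDiff_mem hAB hA.2 hB.2⟩⟩

theorem osIdeal_clDelta {Z : Set (Finset (Fin n))} (hZ : ∀ Y ∈ Z, Y.Nonempty) :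
    OSIdeal K n (clDelta Z) = OSIdeal K n Z := by
  refine le_antisymm (TwoSidedIdeal.span_le.mpr ?_)
    (TwoSidedIdeal.span_mono (Set.image_mono (subset_clDelta Z)))
  have hZ' : Z ⊆ bdMemFamily (OSIdeal K n Z) := fun Y hY =>
    ⟨hZ Y hY, TwoSidedIdeal.subset_span ⟨Y, hY, rfl⟩⟩
  rintro _ ⟨Y, hY, rfl⟩
  exact (clDelta_subset (deltaClosed_bdMemFamily _) hZ' hY).2

theorem stmt6_general (K : Type) [Field K] (n : ℕ) (M : Matroid (Fin n))
    (C' : Set (Finset (Fin n))) (hC' : C' ⊆ Circuits M) :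
    OSIdeal K n C' = OSIdeal K n (clDelta C') :=
  (osIdeal_clDelta fun _ hY => Finset.coe_nonempty.mp (hC' hY).1.nonempty).symm

/-- for any subfamily `𝔠'` of the circuits of `M`, `ℑ(𝔠') = ℑ(cl_Δ(𝔠'))`. -/
theorem stmt6 (K : Type) [Field K] (n : ℕ) (M : Matroid (Fin n)) (hE : M.E = Set.univ)
    (hs : SimpleM M) (C' : Set (Finset (Fin n))) (hC' : C' ⊆ Circuits M) :
    OSIdeal K n C' = OSIdeal K n (clDelta C') :=
  stmt6_general K n M C' hC'
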